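/- Let G:ℝ^d→ℝ be continuous, α∈ℝ, and let z:ℝ^d→ℝ be Lipschitz continuous and a viscosity subsolution of G(Dz)≤α on ℝ^d (equivalently, G(Dz(x))≤α at almost every point x at which z is differentiable). Let ρ:ℝ^d→[0,∞) be a compactly supported, nonnegative, radially symmetric, smooth convolution kernel with ∫ρ=1 and set ρ_ε(x)=ε^{−d}ρ(x/ε) and z^ε=z∗ρ_ε. Then for every ε>0 and every x∈ℝ^d, Dz^ε(x)∈Conv({q∈ℝ^d: G(q)≤α}), the smallest closed convex set containing the sublevel set {q: G(q)≤α}. -/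

import Mathlib

open MeasureTheory Filter Topology Metric NNReal ENNReal
open scoped RealInnerProductSpace Convolution

set_option maxHeartbeats 2000000

noncomputable section

/-- `d`-dimensional Euclidean space. -/
abbrev Rd (d : ℕ) := EuclideanSpace ℝ (Fin d)

/-- `u` is a viscosity subsolution of `F(Du, u, y) = 0` on the (open) set `U`. -/
def IsViscSubOn {d : ℕ} (F : Rd d → ℝ → Rd d → ℝ) (u : Rd d → ℝ) (U : Set (Rd d)) : Prop :=
  ContinuousOn u U ∧
    ∀ φ : Rd d → ℝ, ContDiff ℝ 2 φ → ∀ y₀ ∈ U,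
      IsLocalMax (fun y => u y - φ y) y₀ → F (gradient φ y₀) (u y₀) y₀ ≤ 0

lemma exists_max_on_closed {d : ℕ} {Φ : Rd d → ℝ} (hΦ : Continuous Φ) {A : Set (Rd d)}
    (hA : IsClosed A) {w : Rd d} (hw : w ∈ A) (R : ℝ)
    (hbd : ∀ y ∈ A, Φ w ≤ Φ y → ‖y - w‖ ≤ R) :
    ∃ y₀ ∈ A, ∀ y ∈ A, Φ y ≤ Φ y₀ := by
  set B := A ∩ {y | Φ w ≤ Φ y} with hB
  have hBclosed : IsClosed B := hA.inter (isClosed_le continuous_const hΦ)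
  have hBsub : B ⊆ closedBall w R := by
    intro y hy
    rw [mem_closedBall_iff_norm]
    exact hbd y hy.1 hy.2
  have hBcpt : IsCompact B := (isCompact_closedBall w R).of_isClosed_subset hBclosed hBsub
  have hwB : w ∈ B := ⟨hw, Set.mem_setOf.mpr le_rfl⟩
  obtain ⟨y₀, hy₀B, hy₀max⟩ := hBcpt.exists_isMaxOn ⟨w, hwB⟩ hΦ.continuousOn
  refine ⟨y₀, hy₀B.1, fun y hy => ?_⟩
  rcases le_or_gt (Φ w) (Φ y) with h | h
  · exact hy₀max ⟨hy, h⟩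
  · exact le_trans h.le (hy₀max hwB)

lemma lip_bound {d : ℕ} {z : Rd d → ℝ} {K : ℝ≥0} (hzLip : LipschitzWith K z) (a b : Rd d) :
    z a - z b ≤ (K : ℝ) * ‖a - b‖ := by
  have h := hzLip.dist_le_mul a b
  rw [Real.dist_eq, dist_eq_norm] at h
  exact le_trans (le_abs_self _) h

set_option maxHeartbeats 2000000 in
lemma dir_bound {d : ℕ} (G : Rd d → ℝ) (α : ℝ) (z : Rd d → ℝ) (K : ℝ≥0)
    (hzLip : LipschitzWith K z)
    (hsub : IsViscSubOn (fun q _ _ => G q - α) z Set.univ)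
    (u : Rd d) (hu : ‖u‖ = 1) (b : ℝ) (hb : ∀ q, G q ≤ α → ⟪u, q⟫ ≤ b)
    (w : Rd d) (t₀ : ℝ) (ht₀ : 0 ≤ t₀) :
    z (w + t₀ • u) ≤ z w + b * t₀ := by
  suffices h : ∀ δ : ℝ, 0 < δ → z (w + t₀ • u) ≤ z w + b * t₀ + δ by
    by_contra hc
    push_neg at hc
    linarith [h ((z (w + t₀ • u) - (z w + b * t₀)) / 2) (by linarith)]
  intro δ hδ
  set Kr : ℝ := (K : ℝ) with hKrdef
  have hKr : 0 ≤ Kr := K.coe_nonneg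
  set η : ℝ := δ / (2 * (t₀ + 1)) with hηdef
  have hη : 0 < η := by positivity
  set μ : ℝ := 2 * (Kr ^ 2 + 1) / δ with hμdef
  have hμ : 0 < μ := by positivity
  have hexcess : η * (t₀ + 1) + Kr ^ 2 / μ < δ := by
    have h1 : η * (t₀ + 1) = δ / 2 := by
      rw [hηdef]; field_simp
    have h2 : Kr ^ 2 / μ < δ / 2 := by
      rw [hμdef, div_div_eq_mul_div, div_lt_div_iff₀ (by positivity) (by norm_num)]
      nlinarith
    linarith
  set κ : ℝ := η * Real.exp (-t₀) with hκdef
  have hκ : 0 < κ := by positivity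
  have hκη : κ * Real.exp t₀ = η := by
    rw [hκdef, mul_assoc, ← Real.exp_add]; simp
  clear hηdef hμdef hκdef
  clear_value η μ κ
  -- the linear coordinate along u
  set s : Rd d → ℝ := fun y => ⟪u, y⟫ - ⟪u, w⟫ with hsdef
  have huu : ⟪u, u⟫ = (1 : ℝ) := by
    rw [real_inner_self_eq_norm_sq, hu]; norm_num
  have hs_eq : ∀ y, s y = ⟪u, y - w⟫ := by
    intro y; rw [hsdef]; simp [inner_sub_right]
  have hs_le : ∀ y, |s y| ≤ ‖y - w‖ := by
    intro y
    rw [hs_eq]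
    calc |⟪u, y - w⟫| ≤ ‖u‖ * ‖y - w‖ := abs_real_inner_le_norm u (y - w)
    _ = ‖y - w‖ := by rw [hu, one_mul]
  have hsw : s w = 0 := by rw [hsdef]; ring
  have hst₀ : s (w + t₀ • u) = t₀ := by
    rw [hs_eq, add_sub_cancel_left, real_inner_smul_right, huu, mul_one]
  have hscont : Continuous s :=
    (Continuous.inner continuous_const continuous_id).sub continuous_const
  -- the test function
  set φ : Rd d → ℝ := fun y =>
    (b + η) * s y + κ * Real.exp (s y) + μ * (⟪y - w, y - w⟫ - s y * s y) with hφdef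
  set Φ : Rd d → ℝ := fun y => z y - φ y with hΦdef
  have hP : ∀ y, ⟪y - w, y - w⟫ - s y * s y = ‖y - w‖ ^ 2 - s y ^ 2 := by
    intro y; rw [real_inner_self_eq_norm_sq]; ring
  have hPnn : ∀ y, 0 ≤ ⟪y - w, y - w⟫ - s y * s y := by
    intro y
    rw [hP]
    have := hs_le y
    nlinarith [abs_nonneg (s y), neg_abs_le (s y), le_abs_self (s y)]
  have hφval : ∀ y, φ y =
      (b + η) * s y + κ * Real.exp (s y) + μ * (⟪y - w, y - w⟫ - s y * s y) := fun _ => rfl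
  have hΦval : ∀ y, Φ y = z y -
      ((b + η) * s y + κ * Real.exp (s y) + μ * (⟪y - w, y - w⟫ - s y * s y)) := fun _ => rfl
  have hΦw : Φ w = z w - κ := by
    rw [hΦval, hsw, sub_self]
    simp
  have hΦcont : Continuous Φ := by
    apply hzLip.continuous.sub
    apply Continuous.add
    apply Continuous.add
    · exact continuous_const.mul hscont
    · exact continuous_const.mul (Real.continuous_exp.comp hscont)
    · exact continuous_const.mul
        ((Continuous.inner (continuous_id.sub continuous_const)
          (continuous_id.sub continuous_const)).sub (hscont.mul hscont))
  -- the slab and T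
  set T : ℝ := max (t₀ + 1) ((4 / κ) * (Kr + |b| + Kr ^ 2 / μ) + 1) with hTdef
  have hTt₀ : t₀ + 1 ≤ T := le_max_left _ _
  have hT1 : 1 ≤ T := by linarith [le_max_left (t₀ + 1) ((4 / κ) * (Kr + |b| + Kr ^ 2 / μ) + 1)]
  have hT0 : 0 < T := by linarith
  have hTbig : (4 / κ) * (Kr + |b| + Kr ^ 2 / μ) + 1 ≤ T := le_max_right _ _
  have hexpT : T ^ 2 / 4 ≤ Real.exp T - 1 := by
    have h1 : T / 2 + 1 ≤ Real.exp (T / 2) := by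
      have := Real.add_one_le_exp (T / 2); linarith
    have h2 : (T / 2 + 1) ^ 2 ≤ Real.exp (T / 2) ^ 2 := by
      nlinarith [Real.exp_pos (T / 2)]
    have h3 : Real.exp (T / 2) * Real.exp (T / 2) = Real.exp T := by
      rw [← Real.exp_add]; ring_nf
    nlinarith
  clear hTdef
  clear_value T
  set slab : Set (Rd d) := {y | 0 ≤ s y ∧ s y ≤ T} with hslabdef
  have hslabclosed : IsClosed slab := by
    have : slab = {y | 0 ≤ s y} ∩ {y | s y ≤ T} := rfl
    rw [this]
    exact (isClosed_le continuous_const hscont).inter (isClosed_le hscont continuous_const)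
  have hwslab : w ∈ slab := ⟨by rw [hsw], by rw [hsw]; linarith⟩
  have ht₀slab : w + t₀ • u ∈ slab := ⟨by rw [hst₀]; exact ht₀, by rw [hst₀]; linarith⟩
  -- maximum exists
  set R : ℝ := 1 + (Kr + (|b| + η) * T + μ * T ^ 2) / μ with hRdef
  have hbd : ∀ y ∈ slab, Φ w ≤ Φ y → ‖y - w‖ ≤ R := by
    intro y hy hΦy
    set r : ℝ := ‖y - w‖ with hrdef
    have hr0 : 0 ≤ r := norm_nonneg _
    have hzy : z y - z w ≤ Kr * r := lip_bound hzLip y w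
    have hexp1 : 1 ≤ Real.exp (s y) := by
      rw [← Real.exp_zero]
      exact Real.exp_le_exp.mpr hy.1
    have hbs : -((|b| + η) * T) ≤ (b + η) * s y := by
      have h1 : |(b + η) * s y| ≤ (|b| + η) * T := by
        rw [abs_mul]
        apply mul_le_mul _ _ (abs_nonneg _) (by positivity)
        · calc |b + η| ≤ |b| + |η| := abs_add_le _ _
          _ = |b| + η := by rw [abs_of_pos hη]
        · rw [abs_of_nonneg hy.1]; exact hy.2
      linarith [neg_abs_le ((b + η) * s y)]
    have hμP : μ * (⟪y - w, y - w⟫ - s y * s y)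
        ≤ z y - z w + κ - (b + η) * s y - κ * Real.exp (s y) := by
      have h0 := hΦy
      rw [hΦw, hΦval] at h0
      linarith
    have hκexp : κ * 1 ≤ κ * Real.exp (s y) := mul_le_mul_of_nonneg_left hexp1 hκ.le
    have h1 : μ * (⟪y - w, y - w⟫ - s y * s y) ≤ Kr * r + (|b| + η) * T := by
      linarith
    have hμP2 : μ * (r ^ 2 - T ^ 2) ≤ Kr * r + (|b| + η) * T := by
      rw [hP] at h1
      have h2 : s y ^ 2 ≤ T ^ 2 := by nlinarith [hy.1, hy.2, hT0]
      have h3 : μ * (r ^ 2 - T ^ 2) ≤ μ * (r ^ 2 - s y ^ 2) :=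
        mul_le_mul_of_nonneg_left (by linarith) hμ.le
      linarith
    rcases le_or_gt r 1 with h | h
    · rw [hRdef]
      have : 0 ≤ (Kr + (|b| + η) * T + μ * T ^ 2) / μ :=
        div_nonneg (add_nonneg (add_nonneg hKr
          (mul_nonneg (by linarith [abs_nonneg b]) hT0.le))
          (mul_nonneg hμ.le (sq_nonneg T))) hμ.le
      linarith
    · -- r ≥ 1 : μ r² ≤ Kr r + C + μT² ≤ (Kr + C + μT²) r
      have hC : 0 ≤ (|b| + η) * T := mul_nonneg (by linarith [abs_nonneg b]) hT0.le
      have h1 : μ * r ^ 2 ≤ (Kr + (|b| + η) * T + μ * T ^ 2) * r := by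
        nlinarith [hμP2, mul_le_mul_of_nonneg_left h.le hC,
          mul_le_mul_of_nonneg_left h.le (mul_nonneg hμ.le (sq_nonneg T))]
      have h2 : μ * r ≤ Kr + (|b| + η) * T + μ * T ^ 2 := by
        nlinarith [h1, h]
      have h3 : r ≤ (Kr + (|b| + η) * T + μ * T ^ 2) / μ := (le_div_iff₀' hμ).mpr h2
      rw [hRdef]
      linarith
  obtain ⟨y₀, hy₀slab, hy₀max⟩ := exists_max_on_closed hΦcont hslabclosed hwslab R hbd
  clear hbd hRdef
  clear_value R
  obtain ⟨hs₀0, hs₀T⟩ := hy₀slab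
  set s₀ : ℝ := s y₀ with hs₀def
  -- Case analysis on the position of the maximum point
  rcases eq_or_lt_of_le hs₀0 with hcase0 | hpos
  · -- s₀ = 0 : derive the desired bound
    -- comparison with w
    have hΦwy : Φ w ≤ Φ y₀ := hy₀max w hwslab
    have hΦt : Φ (w + t₀ • u) ≤ Φ y₀ := hy₀max _ ht₀slab
    set r : ℝ := ‖y₀ - w‖ with hrdef
    have hr0 : 0 ≤ r := norm_nonneg _
    have hinner : ⟪y₀ - w, y₀ - w⟫ = r ^ 2 := by
      rw [real_inner_self_eq_norm_sq, ← hrdef]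
    have hΦy₀ : Φ y₀ = z y₀ - κ - μ * r ^ 2 := by
      rw [hΦval, hinner, ← hs₀def, ← hcase0, Real.exp_zero]
      ring
    have hΦt' : Φ (w + t₀ • u) = z (w + t₀ • u) - (b + η) * t₀ - η := by
      rw [hΦval, hst₀, add_sub_cancel_left]
      rw [real_inner_smul_left, real_inner_smul_right, huu, hκη]
      ring
    have hzy : z y₀ - z w ≤ Kr * r := lip_bound hzLip y₀ w
    have hμr : μ * r ^ 2 ≤ Kr * r := by
      rw [hΦw, hΦy₀] at hΦwy
      linarith
    have hAM : Kr * r ≤ μ * r ^ 2 + Kr ^ 2 / μ := by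
      have hdiv : μ * (Kr ^ 2 / μ) = Kr ^ 2 := mul_div_cancel₀ _ (ne_of_gt hμ)
      have hsq := sq_nonneg (μ * r - Kr)
      have hnn : 0 ≤ μ * Kr * r := mul_nonneg (mul_nonneg hμ.le hKr) hr0
      have key : 0 ≤ μ * (μ * r ^ 2 + Kr ^ 2 / μ - Kr * r) := by nlinarith [hsq, hnn, hdiv]
      have := (mul_nonneg_iff_of_pos_left hμ).mp key
      linarith
    rw [hΦt', hΦy₀] at hΦt
    -- z (w + t₀u) ≤ z y₀ - μ r² + (b+η) t₀ + η ≤ z w + Kr²/μ + (b+η)t₀ + η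
    have : z (w + t₀ • u) ≤ z w + Kr ^ 2 / μ + (b + η) * t₀ + η := by linarith
    have hη2 : η * t₀ + η = η * (t₀ + 1) := by ring
    linarith [hexcess, this]
  rcases eq_or_lt_of_le hs₀T with hcaseT | hint
  · -- s₀ = T : impossible by the choice of T
    exfalso
    have hΦwy : Φ w ≤ Φ y₀ := hy₀max w hwslab
    set r : ℝ := ‖y₀ - w‖ with hrdef
    have hr0 : 0 ≤ r := norm_nonneg _
    set p : ℝ := Real.sqrt (r ^ 2 - T ^ 2) with hpdef
    have hinner : ⟪y₀ - w, y₀ - w⟫ = r ^ 2 := by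
      rw [real_inner_self_eq_norm_sq, ← hrdef]
    have hPnn' : (0:ℝ) ≤ r ^ 2 - T ^ 2 := by
      have h := hPnn y₀
      rw [hinner, ← hs₀def, hcaseT] at h
      nlinarith [h]
    have hp0 : 0 ≤ p := Real.sqrt_nonneg _
    have hp2 : p ^ 2 = r ^ 2 - T ^ 2 := Real.sq_sqrt hPnn'
    have hrTp : r ≤ T + p := by nlinarith [hp2, hr0, hT0, hp0]
    have hzy : z y₀ - z w ≤ Kr * r := lip_bound hzLip y₀ w
    have hΦy₀ : Φ y₀ = z y₀ - ((b + η) * T + κ * Real.exp T + μ * (r ^ 2 - T ^ 2)) := by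
      rw [hΦval, hinner, ← hs₀def, hcaseT]
      ring
    have hAM : Kr * p ≤ μ * p ^ 2 + Kr ^ 2 / μ := by
      have hdiv : μ * (Kr ^ 2 / μ) = Kr ^ 2 := mul_div_cancel₀ _ (ne_of_gt hμ)
      have hsq := sq_nonneg (μ * p - Kr)
      have hnn : 0 ≤ μ * Kr * p := mul_nonneg (mul_nonneg hμ.le hKr) hp0
      have key : 0 ≤ μ * (μ * p ^ 2 + Kr ^ 2 / μ - Kr * p) := by nlinarith [hsq, hnn, hdiv]
      have := (mul_nonneg_iff_of_pos_left hμ).mp key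
      linarith
    -- combine : κ (e^T - 1) ≤ (Kr + |b|) T + Kr²/μ
    have hcomb : κ * (Real.exp T - 1) ≤ (Kr + |b|) * T + Kr ^ 2 / μ := by
      rw [hΦw, hΦy₀] at hΦwy
      have h1 : κ * Real.exp T - κ ≤ z y₀ - z w - (b + η) * T - μ * (r ^ 2 - T ^ 2) := by
        linarith
      have h2 : z y₀ - z w ≤ Kr * T + Kr * p := by
        have := mul_le_mul_of_nonneg_left hrTp hKr
        linarith
      have h3 : -(b + η) * T ≤ |b| * T := by
        have : -(b + η) ≤ |b| := by
          have := neg_abs_le b; linarith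
        nlinarith [hT0.le]
      have h4 : μ * (r ^ 2 - T ^ 2) = μ * p ^ 2 := by rw [hp2]
      nlinarith [h1, h2, h3, hAM]
    -- contradiction with T large
    have hκne : κ ≠ 0 := ne_of_gt hκ
    have hfe : κ * ((4 / κ) * (Kr + |b| + Kr ^ 2 / μ) + 1) =
        4 * (Kr + |b| + Kr ^ 2 / μ) + κ := by
      field_simp
    have hκT : 4 * (Kr + |b| + Kr ^ 2 / μ) + κ ≤ κ * T := by
      have h5 := mul_le_mul_of_nonneg_left hTbig hκ.le
      rw [hfe] at h5
      exact h5
    have hquart : κ * (T ^ 2 / 4) ≤ κ * (Real.exp T - 1) :=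
      mul_le_mul_of_nonneg_left hexpT hκ.le
    have hKrμ : 0 ≤ Kr ^ 2 / μ := div_nonneg (sq_nonneg Kr) hμ.le
    have e1 : (4 * (Kr + |b| + Kr ^ 2 / μ) + κ) * T ≤ κ * T * T :=
      mul_le_mul_of_nonneg_right hκT hT0.le
    have e1' : κ * T * T = κ * T ^ 2 := by ring
    rw [e1'] at e1
    have e2 : Kr ^ 2 / μ * 1 ≤ Kr ^ 2 / μ * T := mul_le_mul_of_nonneg_left hT1 hKrμ
    have e3 : 0 < κ * T := mul_pos hκ hT0
    linarith [hcomb, hquart, e1, e2, e3]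
  · -- 0 < s₀ < T : interior maximum, contradiction via the viscosity property
    exfalso
    have hVopen : IsOpen {y : Rd d | 0 < s y ∧ s y < T} :=
      (isOpen_lt continuous_const hscont).inter (isOpen_lt hscont continuous_const)
    have hy₀V : y₀ ∈ {y : Rd d | 0 < s y ∧ s y < T} :=
      ⟨by rw [← hs₀def]; exact hpos, by rw [← hs₀def]; exact hint⟩
    have hVsub : {y : Rd d | 0 < s y ∧ s y < T} ⊆ slab := fun y hy => ⟨hy.1.le, hy.2.le⟩
    have hlocmax : IsLocalMax (fun y => z y - φ y) y₀ := by
      apply Filter.eventually_of_mem (hVopen.mem_nhds hy₀V)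
      intro y hy
      exact hy₀max y (hVsub hy)
    have hsC : ContDiff ℝ 2 s :=
      (ContDiff.inner ℝ contDiff_const contDiff_id).sub contDiff_const
    have hφC2 : ContDiff ℝ 2 φ :=
      ((contDiff_const.mul hsC).add
        (contDiff_const.mul ((Real.contDiff_exp.of_le le_top).comp hsC))).add
        (contDiff_const.mul ((ContDiff.inner ℝ (contDiff_id.sub contDiff_const)
          (contDiff_id.sub contDiff_const)).sub (hsC.mul hsC)))
    -- derivative of the test function
    have hsd : HasFDerivAt s (innerSL ℝ u) y₀ :=
      ((innerSL ℝ u).hasFDerivAt).sub_const _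
    have hexpd : HasFDerivAt (fun y => Real.exp (s y)) (Real.exp (s y₀) • innerSL ℝ u) y₀ :=
      (Real.hasDerivAt_exp (s y₀)).comp_hasFDerivAt y₀ hsd
    have hidd : HasFDerivAt (fun y : Rd d => y - w) (ContinuousLinearMap.id ℝ (Rd d)) y₀ :=
      (hasFDerivAt_id y₀).sub_const w
    have hinnerd := hidd.inner ℝ hidd
    have hsqd := hsd.mul hsd
    have hφd := ((hsd.const_mul (b + η)).add (hexpd.const_mul κ)).add
      ((hinnerd.sub hsqd).const_mul μ)
    have hgrad := hasFDerivAt_iff_hasGradientAt.mp hφd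
    have hgeq := hgrad.gradient
    -- viscosity inequality
    have hGq : G (gradient φ y₀) - α ≤ 0 := hsub.2 φ hφC2 y₀ (Set.mem_univ _) hlocmax
    have hqb : ⟪u, gradient φ y₀⟫ ≤ b := hb _ (by linarith)
    have e₁ : ⟪u, y₀ - w⟫ = s₀ := by rw [← hs_eq, ← hs₀def]
    have e₂ : ⟪y₀ - w, u⟫ = s₀ := by rw [real_inner_comm]; exact e₁
    have hcomp : ⟪u, gradient φ y₀⟫ = b + η + κ * Real.exp s₀ := by
      rw [show gradient φ y₀ = _ from hgeq, real_inner_comm,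
        InnerProductSpace.toDual_symm_apply]
      simp only [ContinuousLinearMap.add_apply, ContinuousLinearMap.coe_smul',
        ContinuousLinearMap.smul_apply, ContinuousLinearMap.comp_apply,
        ContinuousLinearMap.prod_apply, ContinuousLinearMap.coe_sub',
        ContinuousLinearMap.sub_apply, ContinuousLinearMap.id_apply,
        fderivInnerCLM_apply, innerSL_apply_apply, Pi.add_apply, Pi.sub_apply, Pi.smul_apply,
        smul_eq_mul]
      rw [e₁, e₂, huu, ← hs₀def]
      ring
    have hpos' : 0 < κ * Real.exp s₀ := mul_pos hκ (Real.exp_pos _)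
    rw [hcomp] at hqb
    linarith

lemma S_nonempty {d : ℕ} (G : Rd d → ℝ) (α : ℝ) (z : Rd d → ℝ) (K : ℝ≥0)
    (hzLip : LipschitzWith K z)
    (hsub : IsViscSubOn (fun q _ _ => G q - α) z Set.univ) :
    ∃ q : Rd d, G q ≤ α := by
  set φ : Rd d → ℝ := fun y => ⟪y, y⟫ with hφdef
  have hφ : ContDiff ℝ 2 φ := ContDiff.inner ℝ contDiff_id contDiff_id
  have hΦcont : Continuous fun y => z y - φ y :=
    hzLip.continuous.sub (Continuous.inner continuous_id continuous_id)
  have hbd : ∀ y ∈ (Set.univ : Set (Rd d)),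
      z 0 - φ 0 ≤ z y - φ y → ‖y - 0‖ ≤ (K : ℝ) := by
    intro y _ hy
    have h0 : φ (0 : Rd d) = 0 := by simp [hφdef]
    have hyy : φ y = ‖y‖ ^ 2 := real_inner_self_eq_norm_sq y
    have hz : z y - z 0 ≤ (K : ℝ) * ‖y - 0‖ := lip_bound hzLip y 0
    rw [sub_zero] at hz
    rw [sub_zero]
    have h1 : ‖y‖ ^ 2 ≤ (K : ℝ) * ‖y‖ := by
      rw [h0, sub_zero, hyy] at hy; linarith
    nlinarith [norm_nonneg y, K.coe_nonneg]
  obtain ⟨y₀, -, hy₀⟩ := exists_max_on_closed (Φ := fun y => z y - φ y) hΦcont isClosed_univ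
    (Set.mem_univ (0 : Rd d)) (K : ℝ) hbd
  have hmax : IsLocalMax (fun y => z y - φ y) y₀ :=
    Filter.Eventually.of_forall fun y => hy₀ y (Set.mem_univ y)
  have h2 : G (gradient φ y₀) - α ≤ 0 := hsub.2 φ hφ y₀ (Set.mem_univ y₀) hmax
  exact ⟨gradient φ y₀, by linarith⟩

/-- If `z` is Lipschitz and a viscosity subsolution of `G(Dz) ≤ α` on `ℝ^d`,
and `ρ` is a standard smooth, compactly supported, nonnegative, radially symmetric convolution
kernel of total mass one, then the gradient of the mollification `z ∗ ρ_ε`, where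
`ρ_ε(x) = ε^{-d} ρ(x/ε)`, takes values in the smallest closed convex set containing the sublevel
set `{q : G(q) ≤ α}`. -/
theorem stmt_19 {d : ℕ} (G : Rd d → ℝ) (hG : Continuous G) (α : ℝ)
    (z : Rd d → ℝ) (K : ℝ≥0) (hzLip : LipschitzWith K z)
    (hsub : IsViscSubOn (fun q _ _ => G q - α) z Set.univ)
    (ρ : Rd d → ℝ) (hρ0 : ∀ x, 0 ≤ ρ x) (hρsmooth : ContDiff ℝ (⊤ : ℕ∞) ρ)
    (hρcpt : HasCompactSupport ρ) (hρsym : ∀ x y : Rd d, ‖x‖ = ‖y‖ → ρ x = ρ y)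
    (hρint : ∫ x : Rd d, ρ x = 1)
    (ε : ℝ) (hε : 0 < ε) (x : Rd d) :
    gradient (fun w : Rd d => ∫ y : Rd d, (ε ^ (-(d : ℤ)) * ρ (ε⁻¹ • (w - y))) * z y) x ∈
      closure (convexHull ℝ {q : Rd d | G q ≤ α}) := by
  set ρε : Rd d → ℝ := fun t => ε ^ (-(d : ℤ)) * ρ (ε⁻¹ • t) with hρεdef
  set Zε : Rd d → ℝ := fun w => ∫ y : Rd d, ρε (w - y) * z y with hZεdef
  show gradient Zε x ∈ closure (convexHull ℝ {q : Rd d | G q ≤ α})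
  -- basic properties of the rescaled kernel
  have hρεcont : Continuous ρε :=
    continuous_const.mul (hρsmooth.continuous.comp (continuous_const_smul _))
  have hρεsupp : HasCompactSupport ρε := by
    have h1 : HasCompactSupport fun t : Rd d => ρ (ε⁻¹ • t) :=
      hρcpt.comp_smul (inv_ne_zero (ne_of_gt hε))
    exact (h1.mul_left : HasCompactSupport fun t => ε ^ (-(d : ℤ)) * ρ (ε⁻¹ • t))
  have hρε0 : ∀ t, 0 ≤ ρε t := fun t => mul_nonneg (zpow_nonneg hε.le _) (hρ0 _)
  have hρεint : ∫ t : Rd d, ρε t = 1 := by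
    have h1 : ∫ t : Rd d, ρ (ε⁻¹ • t) =
        |((ε⁻¹ ^ Module.finrank ℝ (Rd d))⁻¹)| • ∫ t : Rd d, ρ t :=
      Measure.integral_comp_smul volume ρ ε⁻¹
    have hfr : Module.finrank ℝ (Rd d) = d := finrank_euclideanSpace_fin
    rw [hfr, hρint] at h1
    have h2 : |((ε⁻¹ ^ d)⁻¹)| = ε ^ d := by
      rw [← inv_pow, inv_inv, abs_of_pos (pow_pos hε d)]
    rw [h2] at h1
    calc ∫ t : Rd d, ρε t = ∫ t : Rd d, ε ^ (-(d : ℤ)) * ρ (ε⁻¹ • t) := rfl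
    _ = ε ^ (-(d : ℤ)) * ∫ t : Rd d, ρ (ε⁻¹ • t) := integral_const_mul _ _
    _ = ε ^ (-(d : ℤ)) * (ε ^ d • 1) := by rw [h1]
    _ = 1 := by
        rw [smul_eq_mul, mul_one, zpow_neg, zpow_natCast]
        exact inv_mul_cancel₀ (ne_of_gt (pow_pos hε d))
  -- Zε is smooth (as a convolution with a smooth compactly supported kernel)
  have hρεsm : ContDiff ℝ (⊤ : ℕ∞) ρε :=
    contDiff_const.mul (hρsmooth.comp (contDiff_const_smul _))
  have hzloc : LocallyIntegrable z volume := hzLip.continuous.locallyIntegrable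
  have hconv : Zε = z ⋆[ContinuousLinearMap.mul ℝ ℝ, volume] ρε := by
    funext w
    rw [hZεdef]
    simp only [convolution_def, ContinuousLinearMap.mul_apply']
    exact integral_congr_ae (Filter.Eventually.of_forall fun y => mul_comm _ _)
  have hZdiff : Differentiable ℝ Zε := by
    rw [hconv]
    exact (hρεsupp.contDiff_convolution_right (ContinuousLinearMap.mul ℝ ℝ) hzloc
      (hρεsm.of_le (by simp))).differentiable one_ne_zero
  -- main argument by contradiction, using separation
  by_contra hnot
  obtain ⟨q₀, hq₀⟩ := S_nonempty G α z K hzLip hsub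
  have hq₀m : q₀ ∈ closure (convexHull ℝ {q : Rd d | G q ≤ α}) :=
    subset_closure (subset_convexHull ℝ _ hq₀)
  obtain ⟨f, c, hfs, hfp⟩ := geometric_hahn_banach_closed_point
    (convex_convexHull ℝ _).closure isClosed_closure hnot
  set v : Rd d := (InnerProductSpace.toDual ℝ (Rd d)).symm f with hvdef
  have hvf : ∀ y : Rd d, ⟪v, y⟫ = f y := fun y => InnerProductSpace.toDual_symm_apply
  have hvne : v ≠ 0 := by
    intro h0
    have h1 : f q₀ = 0 := by rw [← hvf, h0, inner_zero_left]
    have h2 : f (gradient Zε x) = 0 := by rw [← hvf, h0, inner_zero_left]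
    have h3 := hfs q₀ hq₀m
    rw [h1] at h3
    rw [h2] at hfp
    linarith
  have hvpos : 0 < ‖v‖ := norm_pos_iff.mpr hvne
  set u : Rd d := ‖v‖⁻¹ • v with hudef
  have hunorm : ‖u‖ = 1 := norm_smul_inv_norm hvne
  set b : ℝ := c / ‖v‖ with hbdef
  have hbS : ∀ q : Rd d, G q ≤ α → ⟪u, q⟫ ≤ b := by
    intro q hq
    have h1 : f q < c := hfs q (subset_closure (subset_convexHull ℝ _ hq))
    have h2 : ⟪u, q⟫ = ‖v‖⁻¹ * f q := by
      rw [hudef, real_inner_smul_left, hvf]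
    rw [h2, hbdef, div_eq_inv_mul]
    exact mul_le_mul_of_nonneg_left h1.le (inv_nonneg.mpr hvpos.le)
  -- the directional bound passes to the mollification
  have hdir : ∀ (x' : Rd d) (t : ℝ), 0 ≤ t → Zε (x' + t • u) ≤ Zε x' + b * t := by
    intro x' t ht
    have key : ∀ y : Rd d, z (y + t • u) ≤ z y + b * t := fun y =>
      dir_bound G α z K hzLip hsub u hunorm b hbS y t ht
    -- integrability of all the integrands involved
    have hsupp1 : HasCompactSupport fun y : Rd d => ρε (x' + t • u - y) :=
      hρεsupp.comp_homeomorph (Homeomorph.subLeft (x' + t • u))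
    have hsupp2 : HasCompactSupport fun y : Rd d => ρε (x' - y) :=
      hρεsupp.comp_homeomorph (Homeomorph.subLeft x')
    have hcont1 : Continuous fun y : Rd d => ρε (x' + t • u - y) :=
      hρεcont.comp (continuous_const.sub continuous_id)
    have hcont2 : Continuous fun y : Rd d => ρε (x' - y) :=
      hρεcont.comp (continuous_const.sub continuous_id)
    have hint1 : Integrable fun y : Rd d => ρε (x' - y) * z (y + t • u) :=
      ((hcont2.mul ((hzLip.continuous.comp (continuous_id.add continuous_const)))).integrable_of_hasCompactSupport
        (hsupp2.mul_right))
    have hint2 : Integrable fun y : Rd d => ρε (x' - y) * z y :=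
      ((hcont2.mul hzLip.continuous).integrable_of_hasCompactSupport hsupp2.mul_right)
    have hint3 : Integrable fun y : Rd d => ρε (x' - y) * (b * t) :=
      ((hcont2.mul continuous_const).integrable_of_hasCompactSupport hsupp2.mul_right)
    -- step 1 : translation invariance
    have step1 : Zε (x' + t • u) = ∫ y : Rd d, ρε (x' - y) * z (y + t • u) := by
      show (∫ y : Rd d, ρε (x' + t • u - y) * z y) = _
      have := integral_add_right_eq_self (μ := volume)
        (fun y : Rd d => ρε (x' + t • u - y) * z y) (t • u)
      rw [← this]
      apply integral_congr_ae
      apply Filter.Eventually.of_forall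
      intro y
      show ρε (x' + t • u - (y + t • u)) * z (y + t • u) = ρε (x' - y) * z (y + t • u)
      have harg : x' + t • u - (y + t • u) = x' - y := by abel
      rw [harg]
    -- step 2 : monotonicity
    have step2 : ∫ y : Rd d, ρε (x' - y) * z (y + t • u) ≤
        ∫ y : Rd d, ρε (x' - y) * (z y + b * t) := by
      apply integral_mono hint1
      · have : (fun y : Rd d => ρε (x' - y) * (z y + b * t)) =
            fun y : Rd d => ρε (x' - y) * z y + ρε (x' - y) * (b * t) := by
          funext y; ring
        rw [this]
        exact hint2.add hint3
      · intro y
        exact mul_le_mul_of_nonneg_left (key y) (hρε0 _)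
    -- step 3 : total mass one
    have hmass : ∫ y : Rd d, ρε (x' - y) = 1 := by
      rw [integral_sub_left_eq_self ρε volume x']
      exact hρεint
    have step3 : ∫ y : Rd d, ρε (x' - y) * (z y + b * t) = Zε x' + b * t := by
      have hsplit : (fun y : Rd d => ρε (x' - y) * (z y + b * t)) =
          fun y : Rd d => ρε (x' - y) * z y + ρε (x' - y) * (b * t) := by
        funext y; ring
      rw [hsplit, integral_add hint2 hint3]
      show _ = (∫ y : Rd d, ρε (x' - y) * z y) + b * t
      congr 1
      rw [integral_mul_const, hmass, one_mul]
    linarith [step1, step2, step3]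
  -- differentiate the directional bound at t = 0
  set D : ℝ := fderiv ℝ Zε x u with hDdef
  have hx0 : x + (0 : ℝ) • u = x := by simp
  have hline : HasDerivAt (fun t : ℝ => Zε (x + t • u)) D 0 := by
    have h1 : HasDerivAt (fun t : ℝ => x + t • u) u 0 := by
      simpa using ((hasDerivAt_id (0 : ℝ)).smul_const u).const_add x
    have h2 : HasFDerivAt Zε (fderiv ℝ Zε x) (x + (0 : ℝ) • u) := by
      rw [hx0]
      exact (hZdiff x).hasFDerivAt
    exact h2.comp_hasDerivAt 0 h1
  have hslope : ∀ t : ℝ, t ≠ 0 → slope (fun t : ℝ => Zε (x + t • u)) 0 t ≤ b := by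
    intro t ht
    rw [slope_def_field, hx0, sub_zero]
    rcases lt_or_gt_of_ne ht with hneg | hposT
    · -- t < 0
      have h1 := hdir (x + t • u) (-t) (by linarith)
      have harg : x + t • u + (-t) • u = x := by
        rw [add_assoc, ← add_smul]
        simp
      rw [harg] at h1
      rw [div_le_iff_of_neg hneg]
      linarith
    · have h1 := hdir x t hposT.le
      rw [div_le_iff₀ hposT]
      linarith
  have hDb : D ≤ b :=
    le_of_tendsto (hasDerivAt_iff_tendsto_slope.mp hline)
      (by filter_upwards [eventually_mem_nhdsWithin] with t ht using hslope t ht)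
  -- conclude : f (gradient Zε x) ≤ c, contradicting strict separation
  have hgu : ⟪gradient Zε x, u⟫ = D := InnerProductSpace.toDual_symm_apply
  have hvu : v = ‖v‖ • u := by
    rw [hudef, smul_smul, mul_inv_cancel₀ (ne_of_gt hvpos), one_smul]
  have hfg : f (gradient Zε x) = ‖v‖ * ⟪u, gradient Zε x⟫ := by
    rw [← hvf]
    conv_lhs => rw [hvu]
    rw [real_inner_smul_left]
  have h6 : ⟪u, gradient Zε x⟫ ≤ b := by
    rw [real_inner_comm, hgu]
    exact hDb
  have hfinal : f (gradient Zε x) ≤ c := by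
    calc f (gradient Zε x) = ‖v‖ * ⟪u, gradient Zε x⟫ := hfg
    _ ≤ ‖v‖ * b := mul_le_mul_of_nonneg_left h6 hvpos.le
    _ = c := by rw [hbdef]; field_simp
  linarith [hfp, hfinal]
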